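/- arXiv:2107.09813 — 2 statements merged into one kernel-verified Lean document; each statement's English description precedes it below -/
import Mathlib

section
/- Let A = (ρ_i)_{i∈A} be a totally ordered family in T such that the set of degrees {deg(ρ_i) : i ∈ A} is unbounded in ℕ. Then every polynomial f ∈ K[x] is A-stable, and consequently the stable limit ρ_A : K[x] → Λ∪{∞}, f ↦ max_i ρ_i(f), is a valuation belonging to T. -/
open Polynomial

namespace MLV

variable {K : Type*} [Field K] {Λ : Type*} [AddCommGroup Λ] [LinearOrder Λ] [IsOrderedAddMonoid Λ]

/-- A valuation on the field `K` with values in `Λ∞ = WithTop Λ`. -/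
structure FieldVal (K : Type*) (Λ : Type*) [Field K] [AddCommGroup Λ] [LinearOrder Λ] [IsOrderedAddMonoid Λ] where
  v : K → WithTop Λ
  map_one' : v 1 = 0
  map_zero' : v 0 = ⊤
  ne_top' : ∀ a : K, a ≠ 0 → v a ≠ ⊤
  map_mul' : ∀ a b : K, v (a * b) = v a + v b
  map_add' : ∀ a b : K, min (v a) (v b) ≤ v (a + b)

/-- `μ` is a node of the tree `T = T(Λ)`: a valuation on `K[x]` with values in `Λ∞`
whose restriction to `K` is `v`. -/
def IsValT (v : FieldVal K Λ) (μ : Polynomial K → WithTop Λ) : Prop :=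
  μ 1 = 0 ∧ μ 0 = ⊤ ∧ (∀ f g : Polynomial K, μ (f * g) = μ f + μ g) ∧
    (∀ f g : Polynomial K, min (μ f) (μ g) ≤ μ (f + g)) ∧
    ∀ a : K, μ (C a) = v.v a

/-- `g ∼_μ h` : `μ(g - h) > μ(g)`. -/
def MuEquiv (μ : Polynomial K → WithTop Λ) (g h : Polynomial K) : Prop :=
  μ g < μ (g - h)

/-- `h ∣_μ g` : `g ∼_μ f * h` for some `f`. -/
def MuDvd (μ : Polynomial K → WithTop Λ) (h g : Polynomial K) : Prop :=
  ∃ f : Polynomial K, MuEquiv μ g (f * h)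

/-- `g ∈ K[x] \ K` is `μ`-minimal if it `μ`-divides no nonzero polynomial of smaller degree. -/
def IsMuMinimal (μ : Polynomial K → WithTop Λ) (g : Polynomial K) : Prop :=
  0 < g.natDegree ∧
    ∀ f : Polynomial K, f ≠ 0 → f.degree < g.degree → ¬ MuDvd μ g f

/-- `g` is `μ`-irreducible. -/
def IsMuIrreducible (μ : Polynomial K → WithTop Λ) (g : Polynomial K) : Prop :=
  μ g ≠ ⊤ ∧ (¬ ∃ f : Polynomial K, MuEquiv μ (f * g) 1) ∧
    ∀ f h : Polynomial K, MuDvd μ g (f * h) → MuDvd μ g f ∨ MuDvd μ g h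

/-- A (Maclane-Vaquié) key polynomial for `μ`. -/
def IsKeyPol (μ : Polynomial K → WithTop Λ) (φ : Polynomial K) : Prop :=
  φ.Monic ∧ IsMuMinimal μ φ ∧ IsMuIrreducible μ φ

/-- An inner node: a valuation admitting key polynomials. -/
def IsInnerNode (μ : Polynomial K → WithTop Λ) : Prop :=
  ∃ φ : Polynomial K, IsKeyPol μ φ

/-- `deg(μ)`: the minimal degree of a key polynomial for `μ`. -/
noncomputable def degOf (μ : Polynomial K → WithTop Λ) : ℕ :=
  sInf {n : ℕ | ∃ φ : Polynomial K, IsKeyPol μ φ ∧ φ.natDegree = n}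

/-- A key polynomial of minimal degree. -/
def IsMinKeyPol (μ : Polynomial K → WithTop Λ) (φ : Polynomial K) : Prop :=
  IsKeyPol μ φ ∧ ∀ ψ : Polynomial K, IsKeyPol μ ψ → φ.natDegree ≤ ψ.natDegree

/-- the class `[φ]_μ` of key polynomials `μ`-equivalent to `φ`. -/
def KeyPolClass (μ : Polynomial K → WithTop Λ) (φ : Polynomial K) : Set (Polynomial K) :=
  {ψ : Polynomial K | IsKeyPol μ ψ ∧ MuEquiv μ ψ φ}

/-- The coefficient `a_s` of the `φ`-expansion `f = Σ_s a_s φ^s` (for `φ` monic nonconstant). -/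
noncomputable def expCoeff (φ f : Polynomial K) (s : ℕ) : Polynomial K :=
  (f /ₘ φ ^ s) %ₘ φ

/-- The augmented valuation `[μ; φ, γ]`, acting on `φ`-expansions by
`ν(Σ_s a_s φ^s) = min_s (μ(a_s) + s γ)`. -/
noncomputable def augVal (μ : Polynomial K → WithTop Λ) (φ : Polynomial K)
    (γ : WithTop Λ) (f : Polynomial K) : WithTop Λ :=
  (Finset.range (f.natDegree + 1)).inf'
    (Finset.nonempty_range_iff.mpr (Nat.succ_ne_zero _))
    fun s => μ (expCoeff φ f s) + s • γ

/-- The depth-zero valuation `ω_{a,δ}`, acting on `(x-a)`-expansions by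
`ω(Σ_s a_s (x-a)^s) = min_s (v(a_s) + s δ)`. -/
noncomputable def omegaVal (v : FieldVal K Λ) (a : K) (δ : WithTop Λ)
    (f : Polynomial K) : WithTop Λ :=
  (Finset.range (f.natDegree + 1)).inf'
    (Finset.nonempty_range_iff.mpr (Nat.succ_ne_zero _))
    fun s => v.v ((taylor a f).coeff s) + s • δ

/-- The tangent direction `t(μ,ν)`: monic polynomials of minimal degree with `μ(φ) < ν(φ)`. -/
def TangentDir (μ ν : Polynomial K → WithTop Λ) : Set (Polynomial K) :=
  {φ : Polynomial K | φ.Monic ∧ μ φ < ν φ ∧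
    ∀ ψ : Polynomial K, ψ.Monic → μ ψ < ν ψ → φ.natDegree ≤ ψ.natDegree}

/-- The set of finite values of `μ`. -/
def valSet (μ : Polynomial K → WithTop Λ) : Set Λ :=
  {γ : Λ | ∃ f : Polynomial K, μ f = (γ : WithTop Λ)}

/-- The value group `Γ_μ`. -/
def valGroup (μ : Polynomial K → WithTop Λ) : AddSubgroup Λ :=
  AddSubgroup.closure (valSet μ)

/-- `Γ = v(K^*)` as a subset of `Λ`. -/
def gammaSet (v : FieldVal K Λ) : Set Λ :=
  {γ : Λ | ∃ a : K, v.v a = (γ : WithTop Λ)}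

/-- The value group `Γ` of the base field valuation. -/
def baseGroup (v : FieldVal K Λ) : AddSubgroup Λ :=
  AddSubgroup.closure (gammaSet v)

/-- `μ` is commensurable over `v` : `Γ_μ/Γ` is torsion. -/
def IsCommensurable (v : FieldVal K Λ) (μ : Polynomial K → WithTop Λ) : Prop :=
  ∀ γ : Λ, γ ∈ valGroup μ → ∃ n : ℕ, 0 < n ∧ n • γ ∈ baseGroup v

/-- `Γ_μ^0 = {μ(a) : a ∈ K[x], 0 ≤ deg(a) < deg(μ)}`. -/
noncomputable def degZeroSet (μ : Polynomial K → WithTop Λ) : Set Λ :=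
  {δ : Λ | ∃ a : Polynomial K, a ≠ 0 ∧ a.natDegree < degOf μ ∧ μ a = (δ : WithTop Λ)}

/-- Equivalence of valuations: an order-preserving isomorphism `ι : Γ_μ → Γ_ν`
with `ν = ι ∘ μ`. -/
def ValEquiv (μ ν : Polynomial K → WithTop Λ) : Prop :=
  ∃ ι : valGroup μ ≃+ valGroup ν,
    Monotone ι ∧ (∀ f : Polynomial K, μ f = ⊤ ↔ ν f = ⊤) ∧
    ∀ (f : Polynomial K) (γ : Λ) (h : μ f = (γ : WithTop Λ)),
      ν f = ((ι ⟨γ, AddSubgroup.subset_closure ⟨f, h⟩⟩ : Λ) : WithTop Λ)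

/-- `β ∼_sme γ` : an order-preserving isomorphism `⟨Γ,β⟩ → ⟨Γ,γ⟩` fixing `Γ`
and mapping `β` to `γ`. -/
def SmeEquiv (v : FieldVal K Λ) (β γ : Λ) : Prop :=
  ∃ ι : (AddSubgroup.closure (gammaSet v ∪ {β}) : AddSubgroup Λ) ≃+
      (AddSubgroup.closure (gammaSet v ∪ {γ}) : AddSubgroup Λ),
    Monotone ι ∧
    (∀ (a : Λ) (ha : a ∈ gammaSet v),
      ((ι ⟨a, AddSubgroup.subset_closure (Set.mem_union_left _ ha)⟩ : Λ) = a)) ∧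
    ((ι ⟨β, AddSubgroup.subset_closure (Set.mem_union_right _ rfl)⟩ : Λ) = γ)

section Families

variable {ι : Type*} [LinearOrder ι]

/-- A totally ordered family of inner nodes of `T`, indexed order-isomorphically by a
totally ordered set, containing no maximal element. -/
def IsTOFamily (v : FieldVal K Λ) (ρ : ι → Polynomial K → WithTop Λ) : Prop :=
  (∀ i, IsValT v (ρ i)) ∧ (∀ i, IsInnerNode (ρ i)) ∧ StrictMono ρ ∧
    ∀ i : ι, ∃ j : ι, i < j

/-- `f` is `A`-stable: the values `ρ_i(f)` are eventually constant. -/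
def IsStablePoly (ρ : ι → Polynomial K → WithTop Λ) (f : Polynomial K) : Prop :=
  ∃ i : ι, ∀ j : ι, i ≤ j → ρ j f = ρ i f

/-- `β` is the stable value `ρ_A(f)`. -/
def IsStableVal (ρ : ι → Polynomial K → WithTop Λ) (f : Polynomial K)
    (β : WithTop Λ) : Prop :=
  ∃ i : ι, ∀ j : ι, i ≤ j → ρ j f = β

open Classical in
/-- The stability function `ρ_A` (junk value `⊤` on unstable polynomials). -/
noncomputable def stableVal (ρ : ι → Polynomial K → WithTop Λ) (f : Polynomial K) :
    WithTop Λ :=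
  if h : ∃ β : WithTop Λ, IsStableVal ρ f β then h.choose else ⊤

/-- The family has stable degree `m`. -/
def HasStableDeg (ρ : ι → Polynomial K → WithTop Λ) (m : ℕ) : Prop :=
  ∃ i : ι, ∀ j : ι, i ≤ j → degOf (ρ j) = m

/-- A continuous family: a totally ordered family of eventually constant degree. -/
def IsContFamily (v : FieldVal K Λ) (ρ : ι → Polynomial K → WithTop Λ) : Prop :=
  IsTOFamily v ρ ∧ ∃ m : ℕ, HasStableDeg ρ m

/-- The stable group `Γ_C`: stable values of nonzero stable polynomials. -/
def stableSet (ρ : ι → Polynomial K → WithTop Λ) : Set Λ :=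
  {δ : Λ | ∃ f : Polynomial K, f ≠ 0 ∧ IsStableVal ρ f (δ : WithTop Λ)}

/-- A limit key polynomial: monic, unstable, of minimal degree among unstable polynomials. -/
def IsLimKeyPol (ρ : ι → Polynomial K → WithTop Λ) (φ : Polynomial K) : Prop :=
  φ.Monic ∧ ¬ IsStablePoly ρ φ ∧
    ∀ f : Polynomial K, ¬ IsStablePoly ρ f → φ.natDegree ≤ f.natDegree

/-- An essential continuous family: `m(C) < m_∞(C) < ∞`. -/
def IsEssential (v : FieldVal K Λ) (ρ : ι → Polynomial K → WithTop Λ) : Prop :=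
  IsTOFamily v ρ ∧
    ∃ m : ℕ, HasStableDeg ρ m ∧
      ∃ φ : Polynomial K, IsLimKeyPol ρ φ ∧ m < φ.natDegree

/-- The limit augmentation `[C; φ, γ]`, acting on `φ`-expansions by
`ν(Σ_s a_s φ^s) = min_s (ρ_C(a_s) + s γ)`. -/
noncomputable def limAugVal (ρ : ι → Polynomial K → WithTop Λ) (φ : Polynomial K)
    (γ : WithTop Λ) (f : Polynomial K) : WithTop Λ :=
  (Finset.range (f.natDegree + 1)).inf'
    (Finset.nonempty_range_iff.mpr (Nat.succ_ne_zero _))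
    fun s => stableVal ρ (expCoeff φ f s) + s • γ

/-- Equivalence of totally ordered families: mutual cofinality. -/
def FamEquiv {κ : Type*} [LinearOrder κ] (ρ : ι → Polynomial K → WithTop Λ)
    (σ : κ → Polynomial K → WithTop Λ) : Prop :=
  (∀ i : ι, ∃ j : κ, ρ i ≤ σ j) ∧ ∀ j : κ, ∃ i : ι, σ j ≤ ρ i

end Families

end MLV

open MLV

/-!
If `ρ_i(f) < ρ_j(f)` for some `i < j`, then a monic polynomial `φ` of minimal degree with
`ρ_i(φ) < ρ_j(φ)` (the tangent direction of `ρ_i` towards `ρ_j`) is a key polynomial for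
`ρ_i`: `ρ_i`-divisibility by `φ` is exactly the condition `ρ_i < ρ_j`, which makes `φ` both
`ρ_i`-minimal and `ρ_i`-irreducible. Hence `deg(ρ_i) ≤ deg φ ≤ deg f`. So once
`deg(ρ_i) > deg f`, the value `ρ_j(f)` no longer changes, and all valuation axioms pass to the
eventual values.
-/

namespace MLV

open Filter

variable {K : Type*} [Field K] {Λ : Type*}

section StableVal

variable {ι : Type*} [LinearOrder ι] {ρ : ι → K[X] → WithTop Λ}

theorem stableVal_eq_of_isStableVal {f : K[X]} {β : WithTop Λ} (h : IsStableVal ρ f β) :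
    stableVal ρ f = β := by
  have hex : ∃ γ, IsStableVal ρ f γ := ⟨β, h⟩
  rw [stableVal, dif_pos hex]
  obtain ⟨i₁, h₁⟩ := hex.choose_spec
  obtain ⟨i₂, h₂⟩ := h
  rw [← h₁ _ (le_max_left i₁ i₂), h₂ _ (le_max_right i₁ i₂)]

theorem eventually_eq_stableVal {f : K[X]} (h : IsStablePoly ρ f) :
    ∀ᶠ j in atTop, ρ j f = stableVal ρ f := by
  obtain ⟨i, hi⟩ := h
  rw [stableVal_eq_of_isStableVal ⟨i, hi⟩]
  exact (eventually_ge_atTop i).mono hi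

theorem le_stableVal [Preorder Λ] [Nonempty ι] (hmono : Monotone ρ) {f : K[X]}
    (h : IsStablePoly ρ f) (i : ι) : ρ i f ≤ stableVal ρ f := by
  obtain ⟨j, hj, hij⟩ := ((eventually_eq_stableVal h).and (eventually_ge_atTop i)).exists
  exact hj ▸ hmono hij f

end StableVal

variable [AddCommGroup Λ] [LinearOrder Λ] [IsOrderedAddMonoid Λ]

section Tangent

variable {μ ν : AddValuation K[X] (WithTop Λ)}

theorem MuEquiv.symm {f g : K[X]} (h : MuEquiv μ f g) : MuEquiv μ g f := by
  unfold MuEquiv at *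
  have hg : μ g = μ f := μ.map_eq_of_lt_sub (x := f) (y := g) (by rwa [μ.map_sub_swap])
  rwa [hg, μ.map_sub_swap]

theorem lt_or_lt_of_mul_lt {f g : K[X]} (h : μ (f * g) < ν (f * g)) :
    μ f < ν f ∨ μ g < ν g := by
  by_contra! hge
  rw [μ.map_mul, ν.map_mul] at h
  exact h.not_ge (add_le_add hge.1 hge.2)

theorem lt_of_mul_lt_of_lt (hle : ∀ f, μ f ≤ ν f) {φ q : K[X]} (hφ : μ φ < ν φ)
    (hq : μ (q * φ) ≠ ⊤) : μ (q * φ) < ν (q * φ) := by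
  rw [μ.map_mul, ν.map_mul] at *
  calc μ q + μ φ < μ q + ν φ := WithTop.add_lt_add_left (WithTop.add_ne_top.1 hq).1 hφ
    _ ≤ ν q + ν φ := add_le_add_left (hle q) _

theorem exists_monic_lt_of_lt (hle : ∀ f, μ f ≤ ν f) {f : K[X]} (hf : f ≠ 0)
    (h : μ f < ν f) :
    ∃ g : K[X], g.Monic ∧ μ g < ν g ∧ g.natDegree = f.natDegree := by
  have hc : f.leadingCoeff⁻¹ ≠ 0 := inv_ne_zero (leadingCoeff_ne_zero.mpr hf)
  refine ⟨f * C f.leadingCoeff⁻¹, monic_mul_leadingCoeff_inv hf, ?_, natDegree_mul_C hc⟩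
  have hCtop : μ (C f.leadingCoeff⁻¹) ≠ ⊤ := ((μ.comap C).ne_top_iff).2 hc
  rw [μ.map_mul, ν.map_mul]
  calc μ f + μ (C f.leadingCoeff⁻¹) < ν f + μ (C f.leadingCoeff⁻¹) :=
        WithTop.add_lt_add_right hCtop h
    _ ≤ ν f + ν (C f.leadingCoeff⁻¹) := add_le_add_right (hle _) _

theorem exists_mem_tangentDir (hle : ∀ f, μ f ≤ ν f) {f : K[X]} (hf : f ≠ 0)
    (h : μ f < ν f) :
    ∃ φ ∈ TangentDir μ ν, φ.natDegree ≤ f.natDegree := by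
  classical
  have hex : ∃ n, ∃ g : K[X], g.Monic ∧ μ g < ν g ∧ g.natDegree = n :=
    ⟨_, exists_monic_lt_of_lt hle hf h⟩
  obtain ⟨φ, hφm, hφ, hφdeg⟩ := Nat.find_spec hex
  refine ⟨φ, ⟨hφm, hφ, fun ψ hψm hψ =>
    hφdeg ▸ Nat.find_min' hex ⟨ψ, hψm, hψ, rfl⟩⟩, ?_⟩
  obtain ⟨g, hgm, hg, hgdeg⟩ := exists_monic_lt_of_lt hle hf h
  exact hφdeg ▸ hgdeg ▸ Nat.find_min' hex ⟨g, hgm, hg, rfl⟩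

namespace TangentDir

variable {φ : K[X]}

theorem eq_of_degree_lt (hle : ∀ f, μ f ≤ ν f) (hφ : φ ∈ TangentDir μ ν) {r : K[X]}
    (hr : r.degree < φ.degree) : μ r = ν r := by
  by_contra hne
  have hr0 : r ≠ 0 := by rintro rfl; simp at hne
  obtain ⟨g, hgm, hg, hgdeg⟩ := exists_monic_lt_of_lt hle hr0 ((hle r).lt_of_ne hne)
  have := hφ.2.2 g hgm hg
  have := natDegree_lt_natDegree hr0 hr
  omega

theorem muDvd_iff (hle : ∀ f, μ f ≤ ν f) (hφ : φ ∈ TangentDir μ ν) {f : K[X]} :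
    MuDvd μ φ f ↔ μ f < ν f := by
  constructor
  · rintro ⟨q, hq⟩
    have hqφ : μ (q * φ) = μ f := μ.map_eq_of_lt_sub (by rwa [μ.map_sub_swap])
    have hrest : μ f < ν (f - q * φ) := hq.trans_le (hle _)
    have hmul : μ f < ν (q * φ) :=
      hqφ ▸ lt_of_mul_lt_of_lt hle hφ.2.1 (hqφ ▸ hq.ne_top)
    simpa using ν.map_lt_add hrest hmul
  · -- With `f = q φ + r`, `deg r < deg φ` gives `μ r = ν r`; were `μ r ≤ μ f`, then `ν r`
    -- would be smaller than both `ν f` and `ν (q φ)`, contradicting `r = f - q φ`.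
    intro h
    refine ⟨f /ₘ φ, ?_⟩
    have hdiv : f - f /ₘ φ * φ = f %ₘ φ := by
      rw [sub_eq_iff_eq_add, mul_comm, modByMonic_add_div f φ]
    unfold MuEquiv
    rw [hdiv]
    by_contra! hrf
    have hr : μ (f %ₘ φ) = ν (f %ₘ φ) :=
      eq_of_degree_lt hle hφ (degree_modByMonic_lt f hφ.1)
    have hνr : ν (f %ₘ φ) < ν f := hr ▸ hrf.trans_lt h
    have hμq : μ (f %ₘ φ) ≤ μ (f /ₘ φ * φ) := by
      have hqφ : f - f %ₘ φ = f /ₘ φ * φ := by rw [← hdiv, sub_sub_cancel]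
      have := μ.map_sub f (f %ₘ φ)
      rwa [min_eq_right hrf, hqφ] at this
    have hνq : ν (f %ₘ φ) < ν (f /ₘ φ * φ) := by
      rcases eq_or_ne (μ (f /ₘ φ * φ)) ⊤ with htop | hfin
      · have htop' := hle (f /ₘ φ * φ)
        rw [htop, top_le_iff] at htop'
        exact htop' ▸ hνr.trans_le le_top
      · exact hr ▸ hμq.trans_lt (lt_of_mul_lt_of_lt hle hφ.2.1 hfin)
    have := ν.map_sub f (f /ₘ φ * φ)
    rw [hdiv] at this
    exact this.not_gt (lt_min hνr hνq)

theorem isKeyPol (hle : ∀ f, μ f ≤ ν f) (hφ : φ ∈ TangentDir μ ν) : IsKeyPol μ φ := by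
  have hφm : φ.Monic := hφ.1
  have hφlt : μ φ < ν φ := hφ.2.1
  have hpos : 0 < φ.natDegree := by
    by_contra! h0
    rw [hφm.natDegree_eq_zero.1 (Nat.le_zero.1 h0), μ.map_one, ν.map_one] at hφlt
    exact hφlt.false
  refine ⟨hφm, ⟨hpos, fun f hf0 hfdeg hdvd => ?_⟩, hφlt.ne_top, ?_, fun f g hdvd => ?_⟩
  · exact ((muDvd_iff hle hφ).1 hdvd).ne (eq_of_degree_lt hle hφ hfdeg)
  · rintro ⟨f, hf⟩
    have := (muDvd_iff hle hφ).1 ⟨f, hf.symm⟩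
    rw [μ.map_one, ν.map_one] at this
    exact this.false
  · exact (lt_or_lt_of_mul_lt ((muDvd_iff hle hφ).1 hdvd)).imp
      (muDvd_iff hle hφ).2 (muDvd_iff hle hφ).2

end TangentDir

theorem degOf_le_of_lt (hle : ∀ f, μ f ≤ ν f) {f : K[X]} (hf : f ≠ 0) (h : μ f < ν f) :
    degOf μ ≤ f.natDegree := by
  obtain ⟨φ, hφ, hφdeg⟩ := exists_mem_tangentDir hle hf h
  have hkey : degOf μ ≤ φ.natDegree := Nat.sInf_le ⟨φ, TangentDir.isKeyPol hle hφ, rfl⟩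
  exact hkey.trans hφdeg

end Tangent

noncomputable def IsValT.toAddValuation {v : FieldVal K Λ} {μ : K[X] → WithTop Λ}
    (h : IsValT v μ) : AddValuation K[X] (WithTop Λ) :=
  AddValuation.of μ h.2.1 h.1 h.2.2.2.1 h.2.2.1

section Family

variable {ι : Type*} [LinearOrder ι] {ρ : ι → K[X] → WithTop Λ}

theorem isValT_stableVal [Nonempty ι] {v : FieldVal K Λ} (hval : ∀ i, IsValT v (ρ i))
    (hstab : ∀ f, IsStablePoly ρ f) : IsValT v (stableVal ρ) := by
  have e := fun f => eventually_eq_stableVal (hstab f)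
  refine ⟨?_, ?_, fun f g => ?_, fun f g => ?_, fun a => ?_⟩
  · obtain ⟨j, hj⟩ := (e 1).exists
    exact hj ▸ (hval j).1
  · obtain ⟨j, hj⟩ := (e 0).exists
    exact hj ▸ (hval j).2.1
  · obtain ⟨j, hf, hg, hfg⟩ := ((e f).and ((e g).and (e (f * g)))).exists
    exact hf ▸ hg ▸ hfg ▸ (hval j).2.2.1 f g
  · obtain ⟨j, hf, hg, hfg⟩ := ((e f).and ((e g).and (e (f + g)))).exists
    exact hf ▸ hg ▸ hfg ▸ (hval j).2.2.2.1 f g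
  · obtain ⟨j, hj⟩ := (e (C a)).exists
    exact hj ▸ (hval j).2.2.2.2 a

theorem eq_of_natDegree_lt_degOf {v : FieldVal K Λ} (hval : ∀ i, IsValT v (ρ i))
    (hmono : Monotone ρ) {f : K[X]} {i j : ι} (hf : f.natDegree < degOf (ρ i)) (hij : i ≤ j) :
    ρ j f = ρ i f := by
  by_contra hne
  have hlt : ρ i f < ρ j f := (hmono hij f).lt_of_ne' hne
  have hf0 : f ≠ 0 := by rintro rfl; rw [(hval i).2.1, (hval j).2.1] at hlt; exact hlt.false
  exact hf.not_ge (degOf_le_of_lt (μ := (hval i).toAddValuation) (ν := (hval j).toAddValuation)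
    (hmono hij) hf0 hlt)

end Family

end MLV

/-- A totally ordered family of unbounded degree has a stable limit: every polynomial is
`A`-stable and the function `ρ_A(f) = max_i ρ_i(f)` is a valuation belonging to `T`. -/
theorem statement_7 {K : Type*} [Field K] {Λ : Type*} [AddCommGroup Λ] [LinearOrder Λ] [IsOrderedAddMonoid Λ] {ι : Type*} [LinearOrder ι] [Nonempty ι]
    (v : FieldVal K Λ) (ρ : ι → Polynomial K → WithTop Λ) (hA : IsTOFamily v ρ)
    (hub : ∀ N : ℕ, ∃ i : ι, N < degOf (ρ i)) :
    (∀ f : Polynomial K, IsStablePoly ρ f) ∧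
    (∀ (f : Polynomial K) (i : ι), ρ i f ≤ stableVal ρ f) ∧
    (∀ f : Polynomial K, ∃ i : ι, ρ i f = stableVal ρ f) ∧
    IsValT v (fun f => stableVal ρ f) := by
  obtain ⟨hval, -, hρ, -⟩ := hA
  have hstab : ∀ f, IsStablePoly ρ f := fun f =>
    let ⟨i, hi⟩ := hub f.natDegree
    ⟨i, fun _ hij => eq_of_natDegree_lt_degOf hval hρ.monotone hi hij⟩
  exact ⟨hstab, fun f => le_stableVal hρ.monotone (hstab f),
    fun f => (eventually_eq_stableVal (hstab f)).exists, isValT_stableVal hval hstab⟩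
end

section
/- Let A and B be totally ordered families in T, and suppose that neither of them is a continuous family with m = m_∞ < ∞ (an inessential continuous family). Then A ∼ B if and only if K[x]_A = K[x]_B and ρ_A(f) = ρ_B(f) for all f in this common set of stable polynomials. -/
open Polynomial

open MLV

/-!
Equivalent families have the same stable values, since each one bounds the other cofinally.

Conversely, fix `ρ i₀` and let `φ` be a monic polynomial of minimal degree on which some later
`ρ i` exceeds `ρ i₀`. Then `φ` is a key polynomial for `ρ i₀`, and every polynomial of smaller
degree is frozen from `i₀` on. The workhorse is MacLane's bound: if `φ` is `μ`-minimal, then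
`μ f ≤ μ (a_s φ^s)` for every term of a `φ`-expansion of `f`, so a valuation that dominates `μ` on
`φ` and in degrees `< deg φ` dominates `μ`.
* If `φ` is `ρ`-stable, its stable value is `> ρ i₀ φ` and is also the `σ`-stable value, so
  `ρ i₀ ≤ σ k` for large `k`: otherwise some `a` of degree `< deg φ` still grows along `σ` after
  `k`, which yields a key polynomial of `σ k` of degree `< deg φ`, and then `σ k ≤ ρ i₀`
  contradicts `σ k φ > ρ i₀ φ`.
* If `φ` is not `ρ`-stable, it is a limit key polynomial, and every `ρ i` with `i > i₀` has
  degree exactly `deg φ`, so `ρ` is an inessential continuous family.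
-/

namespace MLV

section Stability

variable {K : Type*} [Field K] {Λ : Type*} {ι : Type*} [LinearOrder ι] {ρ : ι → K[X] → WithTop Λ}

theorem isStablePoly_iff {f : K[X]} : IsStablePoly ρ f ↔ ∃ β, IsStableVal ρ f β :=
  ⟨fun ⟨i, hi⟩ => ⟨ρ i f, i, hi⟩,
    fun ⟨_, i, hi⟩ => ⟨i, fun j hj => (hi j hj).trans (hi i le_rfl).symm⟩⟩

variable [LinearOrder Λ]

theorem IsStableVal.le (hmono : Monotone ρ) {f : K[X]} {β : WithTop Λ} (h : IsStableVal ρ f β)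
    (i : ι) : ρ i f ≤ β := by
  obtain ⟨i₀, h₀⟩ := h
  exact (hmono (le_max_left i i₀) f).trans_eq (h₀ _ (le_max_right _ _))

theorem exists_lt_of_not_isStablePoly (hmono : Monotone ρ) {f : K[X]} (h : ¬IsStablePoly ρ f)
    (i : ι) : ∃ j, i ≤ j ∧ ρ i f < ρ j f := by
  by_contra! hle
  exact h ⟨i, fun j hj => le_antisymm (hle j hj) (hmono hj f)⟩

variable {κ : Type*} [LinearOrder κ] {σ : κ → K[X] → WithTop Λ}

theorem FamEquiv.symm (h : FamEquiv ρ σ) : FamEquiv σ ρ := ⟨h.2, h.1⟩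

theorem FamEquiv.isStableVal (hρ : Monotone ρ) (hσ : Monotone σ) (h : FamEquiv ρ σ) {f : K[X]}
    {β : WithTop Λ} (hf : IsStableVal ρ f β) : IsStableVal σ f β := by
  obtain ⟨i₀, h₀⟩ := hf
  obtain ⟨k₀, hk₀⟩ := h.1 i₀
  refine ⟨k₀, fun k hk => le_antisymm ?_ ((h₀ i₀ le_rfl).symm.le.trans ((hk₀ f).trans (hσ hk f)))⟩
  obtain ⟨i, hi⟩ := h.2 k
  exact (hi f).trans (IsStableVal.le hρ ⟨i₀, h₀⟩ i)

end Stability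

section Expansion

variable {R : Type*} [CommRing R]

theorem exists_sum_mul_pow_eq [Nontrivial R] {φ : R[X]} (hφ : φ.Monic) (hpos : 0 < φ.natDegree) (f : R[X]) :
    ∃ (n : ℕ) (a : ℕ → R[X]), (∀ s, (a s).natDegree < φ.natDegree) ∧
      ∑ s ∈ Finset.range n, a s * φ ^ s = f := by
  induction hN : f.natDegree using Nat.strong_induction_on generalizing f with
  | _ N ih =>
  by_cases hf : f.natDegree < φ.natDegree
  · exact ⟨1, fun _ => f, fun _ => hf, by simp⟩
  have hφ1 : φ ≠ 1 := by rintro rfl; simp at hpos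
  obtain ⟨n, a, ha, hsum⟩ :=
    ih _ (by rw [natDegree_divByMonic _ hφ]; omega) (f /ₘ φ) rfl
  refine ⟨n + 1, fun s => s.casesOn (f %ₘ φ) a,
    fun s => s.casesOn (natDegree_modByMonic_lt f hφ hφ1) ha, ?_⟩
  rw [Finset.sum_range_succ']
  calc ∑ s ∈ Finset.range n, a s * φ ^ (s + 1) + f %ₘ φ * φ ^ 0
      = f %ₘ φ + φ * ∑ s ∈ Finset.range n, a s * φ ^ s := by
        rw [Finset.mul_sum, pow_zero, mul_one, add_comm]
        congr 1
        exact Finset.sum_congr rfl fun s _ => by ring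
    _ = f := by rw [hsum, modByMonic_add_div]

theorem sum_mul_pow_eq_pow_mul (I : Finset ℕ) {s₀ : ℕ} (hs₀ : s₀ ∈ I) (hmin : ∀ s ∈ I, s₀ ≤ s)
    (a : ℕ → R[X]) (φ : R[X]) :
    ∑ s ∈ I, a s * φ ^ s =
      φ ^ s₀ * (a s₀ + φ * ∑ s ∈ I.erase s₀, a s * φ ^ (s - s₀ - 1)) := by
  rw [← Finset.add_sum_erase _ _ hs₀, Finset.mul_sum, mul_add, Finset.mul_sum, mul_comm]
  congr 1
  refine Finset.sum_congr rfl fun s hs => ?_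
  obtain ⟨d, rfl⟩ : ∃ d, s = s₀ + d + 1 :=
    ⟨s - s₀ - 1, by
      have := hmin s (Finset.mem_of_mem_erase hs)
      have := Finset.ne_of_mem_erase hs
      omega⟩
  rw [show s₀ + d + 1 - s₀ - 1 = d by omega]
  ring

end Expansion

variable {K : Type*} [Field K] {Λ : Type*} [AddCommGroup Λ] [LinearOrder Λ] [IsOrderedAddMonoid Λ]
  {v : FieldVal K Λ}

namespace IsValT

variable {μ : K[X] → WithTop Λ}

noncomputable def toAddValuation_s11 (hμ : IsValT v μ) : AddValuation K[X] (WithTop Λ) :=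
  AddValuation.of μ hμ.2.1 hμ.1 hμ.2.2.2.1 hμ.2.2.1

theorem map_zero (hμ : IsValT v μ) : μ 0 = ⊤ := hμ.2.1

theorem map_one (hμ : IsValT v μ) : μ 1 = 0 := hμ.1

theorem map_mul (hμ : IsValT v μ) (f g : K[X]) : μ (f * g) = μ f + μ g := hμ.2.2.1 f g

theorem map_add (hμ : IsValT v μ) (f g : K[X]) : min (μ f) (μ g) ≤ μ (f + g) := hμ.2.2.2.1 f g

theorem map_C (hμ : IsValT v μ) (c : K) : μ (C c) = v.v c := hμ.2.2.2.2 c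

theorem map_pow (hμ : IsValT v μ) (f : K[X]) (n : ℕ) : μ (f ^ n) = n • μ f :=
  hμ.toAddValuation_s11.map_pow f n

theorem map_sub (hμ : IsValT v μ) (f g : K[X]) : min (μ f) (μ g) ≤ μ (f - g) :=
  hμ.toAddValuation_s11.map_sub f g

theorem map_le_sum (hμ : IsValT v μ) {α : Type*} {s : Finset α} {f : α → K[X]}
    {γ : WithTop Λ} (hf : ∀ i ∈ s, γ ≤ μ (f i)) : γ ≤ μ (∑ i ∈ s, f i) :=
  hμ.toAddValuation_s11.map_le_sum hf

theorem map_lt_sum (hμ : IsValT v μ) {α : Type*} {s : Finset α} {f : α → K[X]}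
    {γ : WithTop Λ} (hγ : γ ≠ ⊤) (hf : ∀ i ∈ s, γ < μ (f i)) : γ < μ (∑ i ∈ s, f i) :=
  hμ.toAddValuation_s11.map_lt_sum hγ hf

theorem map_sub_swap (hμ : IsValT v μ) (f g : K[X]) : μ (f - g) = μ (g - f) :=
  hμ.toAddValuation_s11.map_sub_swap f g

theorem map_eq_of_muEquiv (hμ : IsValT v μ) {f g : K[X]} (h : MuEquiv μ f g) : μ g = μ f :=
  hμ.toAddValuation_s11.map_eq_of_lt_sub (show μ f < μ (g - f) by rwa [hμ.map_sub_swap])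

theorem muEquiv_symm (hμ : IsValT v μ) {f g : K[X]} (h : MuEquiv μ f g) : MuEquiv μ g f := by
  unfold MuEquiv at h ⊢
  rwa [hμ.map_eq_of_muEquiv h, hμ.map_sub_swap]

end IsValT

variable {μ ν : K[X] → WithTop Λ} {φ : K[X]}

theorem exists_monic_natDegree_eq_lt (hμ : IsValT v μ) (hν : IsValT v ν) {g : K[X]}
    (hg : μ g < ν g) : ∃ φ : K[X], φ.Monic ∧ φ.natDegree = g.natDegree ∧ μ φ < ν φ := by
  have hg0 : g ≠ 0 := by rintro rfl; simp [hμ.map_zero, hν.map_zero] at hg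
  have hc : g.leadingCoeff⁻¹ ≠ 0 := inv_ne_zero (leadingCoeff_ne_zero.mpr hg0)
  refine ⟨C g.leadingCoeff⁻¹ * g, ?_, natDegree_C_mul hc, ?_⟩
  · rw [mul_comm]; exact monic_mul_leadingCoeff_inv hg0
  · rw [hμ.map_mul, hν.map_mul, hμ.map_C, hν.map_C]
    exact WithTop.add_lt_add_left (v.ne_top' _ hc) hg

theorem IsValT.map_sum_mul_pow_le_of_forall_eq (hμ : IsValT v μ) (hφ : IsMuMinimal μ φ)
    {I : Finset ℕ} (hI : I.Nonempty) {a : ℕ → K[X]} (ha : ∀ s ∈ I, (a s).natDegree < φ.natDegree)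
    {m : WithTop Λ} (hm : m ≠ ⊤) (hval : ∀ s ∈ I, μ (a s * φ ^ s) = m) :
    μ (∑ s ∈ I, a s * φ ^ s) ≤ m := by
  by_contra! hlt
  set s₀ := I.min' hI
  have hs₀ : s₀ ∈ I := I.min'_mem hI
  rw [sum_mul_pow_eq_pow_mul I hs₀ (fun s hs => I.min'_le s hs), hμ.map_mul] at hlt
  have hterm := hval s₀ hs₀
  rw [hμ.map_mul, add_comm] at hterm
  have hpow : μ (φ ^ s₀) ≠ ⊤ := fun h => hm (by rw [← hterm, h, top_add])
  rw [← hterm, WithTop.add_lt_add_iff_left hpow] at hlt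
  have ha₀ : a s₀ ≠ 0 := fun h => hm (by rw [← hterm, h, hμ.map_zero, add_top])
  -- the equal-valued terms would exhibit `φ` as a `μ`-divisor of `a s₀`
  set q := ∑ s ∈ I.erase s₀, a s * φ ^ (s - s₀ - 1)
  refine hφ.2 (a s₀) ha₀ (degree_lt_degree (ha s₀ hs₀)) ⟨-q, ?_⟩
  unfold MuEquiv
  rwa [show a s₀ - -q * φ = a s₀ + φ * q by ring]

theorem IsValT.map_sum_mul_pow_le (hμ : IsValT v μ) (hφ : IsMuMinimal μ φ) {I : Finset ℕ}
    {a : ℕ → K[X]} (ha : ∀ s ∈ I, (a s).natDegree < φ.natDegree) {s : ℕ} (hs : s ∈ I) :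
    μ (∑ t ∈ I, a t * φ ^ t) ≤ μ (a s * φ ^ s) := by
  by_contra! hlt
  obtain ⟨s₁, hs₁, hmin⟩ := I.exists_min_image (fun t => μ (a t * φ ^ t)) ⟨s, hs⟩
  generalize hm₁ : μ (a s₁ * φ ^ s₁) = m at hmin
  have hm : m < μ (∑ t ∈ I, a t * φ ^ t) := (hmin s hs).trans_lt hlt
  have hrest : m < μ (∑ t ∈ I.filter (fun t => μ (a t * φ ^ t) ≠ m), a t * φ ^ t) :=
    hμ.map_lt_sum hm.ne_top fun t ht =>
      (hmin t (Finset.mem_filter.1 ht).1).lt_of_ne (Finset.mem_filter.1 ht).2.symm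
  have hequal : μ (∑ t ∈ I.filter (fun t => μ (a t * φ ^ t) = m), a t * φ ^ t) ≤ m :=
    hμ.map_sum_mul_pow_le_of_forall_eq hφ (I := I.filter (fun t => μ (a t * φ ^ t) = m))
      ⟨s₁, Finset.mem_filter.2 ⟨hs₁, hm₁⟩⟩
      (fun t ht => ha t (Finset.mem_filter.1 ht).1) hm.ne_top
      (fun t ht => (Finset.mem_filter.1 ht).2)
  rw [eq_sub_iff_add_eq.2 (Finset.sum_filter_add_sum_filter_not I
    (fun t => μ (a t * φ ^ t) = m) (fun t => a t * φ ^ t))] at hequal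
  exact (lt_min hm hrest).not_ge (hequal.trans' (hμ.map_sub _ _))

theorem IsValT.le_of_isMuMinimal (hμ : IsValT v μ) (hν : IsValT v ν) (hφm : φ.Monic)
    (hφ : IsMuMinimal μ φ) (hlow : ∀ a : K[X], a.natDegree < φ.natDegree → μ a ≤ ν a)
    (hφle : μ φ ≤ ν φ) : μ ≤ ν := by
  intro f
  obtain ⟨n, a, ha, rfl⟩ := exists_sum_mul_pow_eq hφm hφ.1 f
  refine hν.map_le_sum fun s hs => ?_
  calc μ (∑ t ∈ Finset.range n, a t * φ ^ t) ≤ μ (a s * φ ^ s) :=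
        hμ.map_sum_mul_pow_le hφ (fun t _ => ha t) hs
    _ ≤ ν (a s * φ ^ s) := by
        rw [hμ.map_mul, hν.map_mul, hμ.map_pow, hν.map_pow]
        exact add_le_add (hlow _ (ha s)) (nsmul_le_nsmul_right hφle s)

theorem IsValT.le_modByMonic (hμ : IsValT v μ) (hφm : φ.Monic) (hφ : IsMuMinimal μ φ)
    (g : K[X]) : μ g ≤ μ (g %ₘ φ) := by
  by_contra! h
  have hr : g %ₘ φ ≠ 0 := by rintro hr; rw [hr, hμ.map_zero] at h; exact not_top_lt h
  refine hφ.2 _ hr (degree_modByMonic_lt _ hφm) ⟨-(g /ₘ φ), ?_⟩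
  unfold MuEquiv
  rwa [show g %ₘ φ - -(g /ₘ φ) * φ = g by linear_combination modByMonic_add_div g φ]

theorem IsValT.muDvd_iff (hμ : IsValT v μ) (hφm : φ.Monic) (hφ : IsMuMinimal μ φ) (g : K[X]) :
    MuDvd μ φ g ↔ μ g < μ (g %ₘ φ) := by
  constructor
  · rintro ⟨q, hq⟩
    calc μ g < μ (g - q * φ) := hq
      _ ≤ μ ((g - q * φ) %ₘ φ) := hμ.le_modByMonic hφm hφ _
      _ = μ (g %ₘ φ) := by rw [sub_modByMonic, mul_self_modByMonic hφm, sub_zero]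
  · intro h
    refine ⟨g /ₘ φ, ?_⟩
    unfold MuEquiv
    rwa [show g - g /ₘ φ * φ = g %ₘ φ by linear_combination -modByMonic_add_div g φ]

theorem IsValT.lt_of_muDvd (hμ : IsValT v μ) (hν : IsValT v ν) (hle : μ ≤ ν) (hlt : μ φ < ν φ)
    {g : K[X]} (h : MuDvd μ φ g) : μ g < ν g := by
  obtain ⟨q, hq⟩ := h
  have hqφ : μ (q * φ) = μ g := hμ.map_eq_of_muEquiv hq
  have hq_ne : μ q ≠ ⊤ := fun h => hq.ne_top (by rw [← hqφ, hμ.map_mul, h, top_add])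
  have hmul : μ (q * φ) < ν (q * φ) := by
    rw [hμ.map_mul, hν.map_mul]
    exact (WithTop.add_lt_add_left hq_ne hlt).trans_le (add_le_add_left (hle q) _)
  calc μ g < min (ν (g - q * φ)) (ν (q * φ)) := lt_min (hq.trans_le (hle _)) (hqφ ▸ hmul)
    _ ≤ ν g := by simpa using hν.map_add (g - q * φ) (q * φ)

section Tangent

variable (hμ : IsValT v μ) (hν : IsValT v ν) (hle : μ ≤ ν) (hφm : φ.Monic) (hlt : μ φ < ν φ)
  (hfroz : ∀ a : K[X], a.natDegree < φ.natDegree → μ a = ν a)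

include hμ hν hle hφm hlt hfroz

theorem isMuMinimal_of_tangent : IsMuMinimal μ φ := by
  have hpos : 0 < φ.natDegree := by
    by_contra! h
    rw [hφm.natDegree_eq_zero.1 (by omega), hμ.map_one, hν.map_one] at hlt
    exact hlt.false
  exact ⟨hpos, fun f hf hdeg hdvd =>
    (hμ.lt_of_muDvd hν hle hlt hdvd).ne (hfroz f (natDegree_lt_natDegree hf hdeg))⟩

theorem isKeyPol_of_tangent : IsKeyPol μ φ := by
  have hφ := isMuMinimal_of_tangent hμ hν hle hφm hlt hfroz
  have hφ1 : φ ≠ 1 := by rintro rfl; simpa using hφ.1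
  refine ⟨hφm, hφ, hlt.ne_top, ?_, fun f g hfg => ?_⟩
  · rintro ⟨f, hf⟩
    have := hμ.lt_of_muDvd hν hle hlt ⟨f, hμ.muEquiv_symm hf⟩
    rw [hμ.map_one, hν.map_one] at this
    exact this.false
  · by_contra! hnot
    simp only [hμ.muDvd_iff hφm hφ, not_lt] at hfg hnot
    have hf := le_antisymm hnot.1 (hμ.le_modByMonic hφm hφ f)
    have hg := le_antisymm hnot.2 (hμ.le_modByMonic hφm hφ g)
    -- the product of the remainders is `μ`-divisible by `φ`, yet its value is frozen
    have hdvd : MuDvd μ φ (f %ₘ φ * (g %ₘ φ)) := by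
      rw [hμ.muDvd_iff hφm hφ, ← mul_modByMonic, hμ.map_mul, hf, hg, ← hμ.map_mul]
      exact hfg
    have := hμ.lt_of_muDvd hν hle hlt hdvd
    rw [hμ.map_mul, hν.map_mul, hfroz _ (natDegree_modByMonic_lt f hφm hφ1),
      hfroz _ (natDegree_modByMonic_lt g hφm hφ1)] at this
    exact this.false

end Tangent

section Families

variable {ι : Type*} {ρ : ι → K[X] → WithTop Λ}

theorem exists_monic_lt_minimal_natDegree (hρ : ∀ i, IsValT v (ρ i)) (hμ : IsValT v μ)
    {i : ι} {g : K[X]} (hg : μ g < ρ i g) :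
    ∃ φ : K[X], φ.Monic ∧ φ.natDegree ≤ g.natDegree ∧ (∃ i, μ φ < ρ i φ) ∧
      ∀ j (f : K[X]), μ f < ρ j f → φ.natDegree ≤ f.natDegree := by
  classical
  have hex : ∃ n, ∃ j, ∃ f : K[X], f.natDegree = n ∧ μ f < ρ j f := ⟨_, i, g, rfl, hg⟩
  obtain ⟨j, f, hf, hlt⟩ := Nat.find_spec hex
  obtain ⟨φ, hφm, hφdeg, hφlt⟩ := exists_monic_natDegree_eq_lt hμ (hρ j) hlt
  refine ⟨φ, hφm, ?_, ⟨j, hφlt⟩, fun k f' hf' => ?_⟩ <;> rw [hφdeg, hf]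
  exacts [Nat.find_min' hex ⟨i, g, rfl, hg⟩, Nat.find_min' hex ⟨k, f', rfl, hf'⟩]

variable [LinearOrder ι]

theorem IsTOFamily.isValT (hρ : IsTOFamily v ρ) (i : ι) : IsValT v (ρ i) := hρ.1 i

theorem IsTOFamily.isInnerNode (hρ : IsTOFamily v ρ) (i : ι) : IsInnerNode (ρ i) := hρ.2.1 i

theorem IsTOFamily.strictMono (hρ : IsTOFamily v ρ) : StrictMono ρ := hρ.2.2.1

theorem IsTOFamily.monotone (hρ : IsTOFamily v ρ) : Monotone ρ := hρ.strictMono.monotone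

theorem IsTOFamily.exists_gt (hρ : IsTOFamily v ρ) (i : ι) : ∃ j, i < j := hρ.2.2.2 i

theorem exists_isKeyPol_of_lt (hρ : ∀ i, IsValT v (ρ i)) (hmono : Monotone ρ) {i₀ i : ι}
    {g : K[X]} (hg : ρ i₀ g < ρ i g) :
    ∃ φ : K[X], IsKeyPol (ρ i₀) φ ∧ φ.natDegree ≤ g.natDegree ∧ (∃ i₁, ρ i₀ φ < ρ i₁ φ) ∧
      ∀ a : K[X], a.natDegree < φ.natDegree → ∀ j, i₀ ≤ j → ρ j a = ρ i₀ a := by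
  obtain ⟨φ, hφm, hdeg, ⟨i₁, hlt⟩, hmin⟩ :=
    exists_monic_lt_minimal_natDegree hρ (hρ i₀) hg
  have hfroz : ∀ a : K[X], a.natDegree < φ.natDegree → ∀ j, i₀ ≤ j → ρ j a = ρ i₀ a :=
    fun a ha j hj => le_antisymm (not_lt.1 fun h => (hmin j a h).not_gt ha) (hmono hj a)
  have hi₁ : i₀ ≤ i₁ := not_lt.1 fun h => (hlt.trans_le (hmono h.le φ)).false
  exact ⟨φ, isKeyPol_of_tangent (hρ i₀) (hρ i₁) (hmono hi₁) hφm hlt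
    (fun a ha => (hfroz a ha i₁ hi₁).symm), hdeg, ⟨i₁, hlt⟩, hfroz⟩

theorem exists_le_of_isStableVal_of_isMuMinimal (hρ : ∀ i, IsValT v (ρ i)) (hmono : Monotone ρ)
    (hμ : IsValT v μ) (hφm : φ.Monic) (hφ : IsMuMinimal μ φ)
    (hlow : ∀ a : K[X], a.natDegree < φ.natDegree → IsStableVal ρ a (μ a)) {β : WithTop Λ}
    (hβ : IsStableVal ρ φ β) (hφβ : μ φ < β) : ∃ i, μ ≤ ρ i := by
  obtain ⟨i, hi⟩ := hβ
  refine ⟨i, hμ.le_of_isMuMinimal (hρ i) hφm hφ (fun a ha => ?_) (hi i le_rfl ▸ hφβ.le)⟩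
  by_contra! hbad
  obtain ⟨j, hj⟩ := hlow a ha
  obtain ⟨θ, hθ, hθdeg, -, -⟩ :=
    exists_isKeyPol_of_lt hρ hmono (show ρ i a < ρ (max i j) a from hj _ (le_max_right _ _) ▸ hbad)
  -- a key polynomial of `ρ i` below `deg φ` forces `ρ i ≤ μ`, which fails at `φ`
  have hle : ρ i ≤ μ := (hρ i).le_of_isMuMinimal hμ hθ.1 hθ.2.1
    (fun b hb => (hlow b (by omega)).le hmono i) ((hlow θ (by omega)).le hmono i)
  exact (hφβ.trans_le ((hi i le_rfl).symm.le.trans (hle φ))).false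

theorem IsTOFamily.hasStableDeg_and_isLimKeyPol (hρ : IsTOFamily v ρ) {i₀ : ι} (hφm : φ.Monic)
    (hφ : ¬IsStablePoly ρ φ)
    (hfroz : ∀ a : K[X], a.natDegree < φ.natDegree → ∀ j, i₀ ≤ j → ρ j a = ρ i₀ a) :
    HasStableDeg ρ φ.natDegree ∧ IsLimKeyPol ρ φ := by
  refine ⟨?_, hφm, hφ, fun f hf => not_lt.1 fun h => hf ⟨i₀, fun j hj => hfroz f h j hj⟩⟩
  obtain ⟨i₁, hi₁⟩ := hρ.exists_gt i₀
  refine ⟨i₁, fun j hj => ?_⟩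
  have hi₀j : i₀ ≤ j := hi₁.le.trans hj
  refine le_antisymm ?_ ?_
  · obtain ⟨j', hjj', hlt⟩ := exists_lt_of_not_isStablePoly hρ.monotone hφ j
    exact Nat.sInf_le ⟨φ, isKeyPol_of_tangent (hρ.isValT j) (hρ.isValT j') (hρ.monotone hjj')
      hφm hlt fun a ha => (hfroz a ha j hi₀j).trans (hfroz a ha j' (hi₀j.trans hjj')).symm, rfl⟩
  · obtain ⟨X, hX⟩ := hρ.isInnerNode j
    refine le_csInf ⟨_, X, hX, rfl⟩ ?_
    rintro _ ⟨X, hX, rfl⟩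
    by_contra! hlt
    -- a key polynomial of `ρ j` of degree below `deg φ` would force `ρ j ≤ ρ i₀`
    have hle : ρ j ≤ ρ i₀ := (hρ.isValT j).le_of_isMuMinimal (hρ.isValT i₀) hX.1 hX.2.1
      (fun a ha => (hfroz a (ha.trans hlt) j hi₀j).le) (hfroz X hlt j hi₀j).le
    exact (hρ.strictMono (hi₁.trans_le hj)).not_ge hle

theorem IsTOFamily.exists_le_of_isStableVal_imp {κ : Type*} [LinearOrder κ]
    {σ : κ → K[X] → WithTop Λ} (hρ : IsTOFamily v ρ) (hσ : IsTOFamily v σ)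
    (hρni : ¬ ∃ (m : ℕ) (φ : K[X]), HasStableDeg ρ m ∧ IsLimKeyPol ρ φ ∧ φ.natDegree = m)
    (hval : ∀ f β, IsStableVal ρ f β → IsStableVal σ f β) (i₀ : ι) : ∃ k, ρ i₀ ≤ σ k := by
  obtain ⟨i, hi⟩ := hρ.exists_gt i₀
  obtain ⟨g, hg⟩ := (Pi.lt_def.1 (hρ.strictMono hi)).2
  obtain ⟨φ, hφ, -, ⟨i₁, hφlt⟩, hfroz⟩ := exists_isKeyPol_of_lt hρ.isValT hρ.monotone hg
  by_cases hst : IsStablePoly ρ φ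
  · obtain ⟨β, hβ⟩ := isStablePoly_iff.1 hst
    exact exists_le_of_isStableVal_of_isMuMinimal hσ.isValT hσ.monotone (hρ.isValT i₀) hφ.1
      hφ.2.1 (fun a ha => hval a _ ⟨i₀, fun j hj => hfroz a ha j hj⟩) (hval φ β hβ)
      (hφlt.trans_le (hβ.le hρ.monotone i₁))
  · obtain ⟨hdeg, hlim⟩ := hρ.hasStableDeg_and_isLimKeyPol hφ.1 hst hfroz
    exact (hρni ⟨_, φ, hdeg, hlim, rfl⟩).elim

end Families

end MLV

theorem statement_11_general {K : Type*} [Field K] {Λ : Type*} [AddCommGroup Λ] [LinearOrder Λ] [IsOrderedAddMonoid Λ]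
    {ι : Type*} [LinearOrder ι] {κ : Type*} [LinearOrder κ]
    (v : FieldVal K Λ) (ρ : ι → Polynomial K → WithTop Λ)
    (σ : κ → Polynomial K → WithTop Λ)
    (hρ : IsTOFamily v ρ) (hσ : IsTOFamily v σ)
    (hρni : ¬ ∃ (m : ℕ) (φ : Polynomial K),
      HasStableDeg ρ m ∧ IsLimKeyPol ρ φ ∧ φ.natDegree = m)
    (hσni : ¬ ∃ (m : ℕ) (φ : Polynomial K),
      HasStableDeg σ m ∧ IsLimKeyPol σ φ ∧ φ.natDegree = m) :
    FamEquiv ρ σ ↔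
      ((∀ f : Polynomial K, IsStablePoly ρ f ↔ IsStablePoly σ f) ∧
        ∀ (f : Polynomial K) (β : WithTop Λ), IsStablePoly ρ f →
          (IsStableVal ρ f β ↔ IsStableVal σ f β)) := by
  constructor
  · intro h
    have hval : ∀ f β, IsStableVal ρ f β ↔ IsStableVal σ f β := fun f β =>
      ⟨h.isStableVal hρ.monotone hσ.monotone, h.symm.isStableVal hσ.monotone hρ.monotone⟩
    exact ⟨fun f => by simp only [isStablePoly_iff, hval], fun f β _ => hval f β⟩
  · rintro ⟨hstab, hval⟩
    refine ⟨hρ.exists_le_of_isStableVal_imp hσ hρni fun f β h => ?_,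
      hσ.exists_le_of_isStableVal_imp hρ hσni fun f β h => ?_⟩
    · exact (hval f β (isStablePoly_iff.2 ⟨β, h⟩)).1 h
    · exact (hval f β ((hstab f).2 (isStablePoly_iff.2 ⟨β, h⟩))).2 h

/-- Two totally ordered families, neither of which is an inessential continuous family,
are equivalent if and only if they have the same stable polynomials and the same
stable values. -/
theorem statement_11 {K : Type*} [Field K] {Λ : Type*} [AddCommGroup Λ] [LinearOrder Λ] [IsOrderedAddMonoid Λ]
    {ι : Type*} [LinearOrder ι] [Nonempty ι] {κ : Type*} [LinearOrder κ] [Nonempty κ]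
    (v : FieldVal K Λ) (ρ : ι → Polynomial K → WithTop Λ)
    (σ : κ → Polynomial K → WithTop Λ)
    (hρ : IsTOFamily v ρ) (hσ : IsTOFamily v σ)
    (hρni : ¬ ∃ (m : ℕ) (φ : Polynomial K),
      HasStableDeg ρ m ∧ IsLimKeyPol ρ φ ∧ φ.natDegree = m)
    (hσni : ¬ ∃ (m : ℕ) (φ : Polynomial K),
      HasStableDeg σ m ∧ IsLimKeyPol σ φ ∧ φ.natDegree = m) :
    FamEquiv ρ σ ↔
      ((∀ f : Polynomial K, IsStablePoly ρ f ↔ IsStablePoly σ f) ∧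
        ∀ (f : Polynomial K) (β : WithTop Λ), IsStablePoly ρ f →
          (IsStableVal ρ f β ↔ IsStableVal σ f β)) :=
  statement_11_general v ρ σ hρ hσ hρni hσni
end
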